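/- arXiv:1502.07097 — 2 statements merged into one kernel-verified Lean document; each statement's English description precedes it below -/
import Mathlib

section
/- There exist absolute constants c0, c1, c2 and, for every 2 < q ≤ 4, constants c3, c4 depending only on q, for which the following holds. Let f ∈ Lq(μ) be nonzero, let 1 ≤ m ≤ N with N ≥ c0·m, and set I_f = {1 ≤ i ≤ N : |f(X_i)| ≤ (N/m)^{1/q}‖f‖_{Lq}}. Then with probability at least 1 − 2exp(−c1 m): (1) |I_f| ≥ N − c2·m, and (2) for every J ⊂ {1,…,N} with |J| ≤ 4m, ‖f‖_{L2}² − c3‖f‖_{Lq}²(m/N)^{1−2/q} ≤ N^{−1}∑_{i∈I_f∖J} f²(X_i) ≤ ‖f‖_{L2}² + c4‖f‖_{Lq}²(m/N)^{1−2/q}. -/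
open MeasureTheory ProbabilityTheory

variable {Ω : Type} [MeasurableSpace Ω]

noncomputable def l2norm (μ : Measure Ω) (f : Ω → ℝ) : ℝ :=
  Real.sqrt (∫ x, (f x) ^ 2 ∂μ)

noncomputable def lqnorm (μ : Measure Ω) (q : ℝ) (f : Ω → ℝ) : ℝ :=
  (∫ x, |f x| ^ q ∂μ) ^ (1 / q)

noncomputable def diam2 (μ : Measure Ω) (V : Set (Ω → ℝ)) : ℝ :=
  sSup {d | ∃ v₁ ∈ V, ∃ v₂ ∈ V, d = l2norm μ (v₁ - v₂)}

def midSet (F : Set (Ω → ℝ)) : Set (Ω → ℝ) :=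
  {u | ∃ f₁ ∈ F, ∃ f₂ ∈ F, u = fun x => (f₁ x + f₂ x) / 2}

def starSh (K : Set (Ω → ℝ)) : Set (Ω → ℝ) :=
  {g | ∃ l : ℝ, 0 ≤ l ∧ l ≤ 1 ∧ ∃ k ∈ K, g = fun x => l * k x}

def setSub (A B : Set (Ω → ℝ)) : Set (Ω → ℝ) :=
  {g | ∃ a ∈ A, ∃ b ∈ B, g = a - b}

def ball2 (μ : Measure Ω) (r : ℝ) : Set (Ω → ℝ) := {h | l2norm μ h ≤ r}

noncomputable def goodIdx {N : ℕ} (f : Ω → ℝ) (thr : ℝ) (x : Fin N → Ω) : Finset (Fin N) :=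
  letI : DecidablePred (fun i : Fin N => |f (x i)| ≤ thr) := fun _ => Classical.dec _
  Finset.univ.filter (fun i => |f (x i)| ≤ thr)

/-!
Put `thr = (N/m)^{1/q} ‖f‖_{Lq}`; by Markov's inequality `P(|f| > thr) ≤ m/N`. Split `f²` into
`truncSq f thr = f² 1{|f| ≤ thr}` and the rest. Comparing `|f|²` and `|f|⁴` with `|f|^q` on either
side of `thr` gives `E f² - E truncSq ≤ (m/N) thr²` (as `q ≥ 2`) and `E truncSq² ≤ (m/N) thr⁴`
(as `q ≤ 4`), where `(m/N) thr² = ‖f‖²_{Lq} (m/N)^{1-2/q}`. Bernstein's inequality, from the bound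
`exp x ≤ 1 + x + x²` for `|x| ≤ 1`, applied to the indicators of `|f(X_i)| > thr` and to the
bounded variables `truncSq f thr (X_i)`, shows that outside an event of probability `3e^{-m}` at
most `3m` indices are truncated and `∑ truncSq f thr (X_i)` is within `2m thr²` of
`N E truncSq`. Removing `J` from `I_f` costs at most `4m thr²`, since every term over `I_f` is at
most `thr²`; the constants `7 = 1 + 2 + 4` and `2` collect these errors.
-/

open Real

lemma exp_le_one_add_add_sq {x : ℝ} (hx : |x| ≤ 1) : exp x ≤ 1 + x + x ^ 2 := by
  have := (le_abs_self _).trans (abs_exp_sub_one_sub_id_le hx)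
  linarith

section Bernstein

variable {α : Type*} [MeasurableSpace α] {μ : Measure α} [IsProbabilityMeasure μ] {Y : α → ℝ}
  {B l : ℝ}

lemma abs_sub_integral_le_of_nonneg_of_le (hY : Measurable Y) (h0 : ∀ ω, 0 ≤ Y ω)
    (hB : ∀ ω, Y ω ≤ B) (ω : α) : |Y ω - μ[Y]| ≤ B := by
  have hint : Integrable Y μ := .of_bound hY.aestronglyMeasurable B
    (ae_of_all _ fun ω => by rw [Real.norm_eq_abs, abs_of_nonneg (h0 ω)]; exact hB ω)
  have hmean0 : 0 ≤ μ[Y] := integral_nonneg h0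
  have hmeanB : μ[Y] ≤ B := by
    simpa using integral_mono hint (integrable_const B) hB
  exact abs_sub_le_iff.2 ⟨by linarith [h0 ω, hB ω], by linarith [h0 ω, hB ω]⟩

lemma mgf_sub_integral_le_exp_mul_variance (hY : Measurable Y) (hB : ∀ ω, |Y ω - μ[Y]| ≤ B)
    (hl : 0 ≤ l) (hlB : l * B ≤ 1) :
    mgf (fun ω => Y ω - μ[Y]) μ l ≤ exp (l ^ 2 * Var[Y; μ]) := by
  set Z : α → ℝ := fun ω => Y ω - μ[Y]
  have hZm : Measurable Z := hY.sub_const _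
  have hlZ : ∀ ω, |l * Z ω| ≤ 1 := fun ω => by
    rw [abs_mul, abs_of_nonneg hl]
    exact (mul_le_mul_of_nonneg_left (hB ω) hl).trans hlB
  have hZ : Integrable Z μ :=
    .of_bound hZm.aestronglyMeasurable B (ae_of_all _ hB)
  have hY' : Integrable Y μ :=
    .of_bound hY.aestronglyMeasurable (B + |μ[Y]|) (ae_of_all _ fun ω => by
      have := (abs_sub_abs_le_abs_sub (Y ω) μ[Y]).trans (hB ω)
      rw [Real.norm_eq_abs]; linarith)
  have hlZ1 : Integrable (fun ω => 1 + l * Z ω) μ := (integrable_const 1).add (hZ.const_mul l)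
  have hlZ2 : Integrable (fun ω => (l * Z ω) ^ 2) μ :=
    .of_bound ((hZm.const_mul l).pow_const 2).aestronglyMeasurable 1 (ae_of_all _ fun ω => by
      rw [Real.norm_eq_abs, abs_pow]; exact pow_le_one₀ (abs_nonneg _) (hlZ ω))
  have hZ0 : ∫ ω, Z ω ∂μ = 0 := by simp [Z, integral_sub hY' (integrable_const _)]
  calc mgf Z μ l ≤ ∫ ω, (1 + l * Z ω + (l * Z ω) ^ 2) ∂μ :=
        integral_mono (.of_bound (hZm.const_mul l).exp.aestronglyMeasurable (exp 1)
          (ae_of_all _ fun ω => by simpa using (le_abs_self _).trans (hlZ ω)))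
          (hlZ1.add hlZ2)
          fun ω => exp_le_one_add_add_sq (hlZ ω)
    _ = 1 + l ^ 2 * Var[Y; μ] := by
        rw [integral_add hlZ1 hlZ2, integral_add (integrable_const 1) (hZ.const_mul l),
          integral_const_mul, hZ0,
          variance_eq_integral hY.aemeasurable, ← integral_const_mul]
        simp [Z, mul_pow]
    _ ≤ exp (l ^ 2 * Var[Y; μ]) := by linarith [add_one_le_exp (l ^ 2 * Var[Y; μ])]

lemma measure_le_sum_sub_integral_le (hY : Measurable Y) (hB : ∀ ω, |Y ω - μ[Y]| ≤ B)
    (hl : 0 ≤ l) (hlB : l * B ≤ 1) (N : ℕ) (t : ℝ) :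
    (Measure.pi fun _ : Fin N => μ) {x | t ≤ ∑ i, (Y (x i) - μ[Y])} ≤
      ENNReal.ofReal (exp (N * l ^ 2 * Var[Y; μ] - l * t)) := by
  set P := Measure.pi fun _ : Fin N => μ
  set S : (Fin N → α) → ℝ := fun x => ∑ i, (Y (x i) - μ[Y])
  have hS : Measurable S :=
    Finset.measurable_sum _ fun i _ => (hY.comp (measurable_pi_apply i)).sub_const _
  have hSB : ∀ x, |l * S x| ≤ N := fun x => by
    rw [abs_mul, abs_of_nonneg hl]
    calc l * |S x| ≤ l * ∑ i, |Y (x i) - μ[Y]| :=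
          mul_le_mul_of_nonneg_left (Finset.abs_sum_le_sum_abs _ _) hl
      _ ≤ l * ∑ _i : Fin N, B := mul_le_mul_of_nonneg_left (Finset.sum_le_sum fun i _ => hB _) hl
      _ = N * (l * B) := by
          rw [Finset.sum_const, Finset.card_univ, Fintype.card_fin, nsmul_eq_mul]; ring
      _ ≤ N := mul_le_of_le_one_right (Nat.cast_nonneg N) hlB
  have hmgf : mgf S P l = mgf (fun ω => Y ω - μ[Y]) μ l ^ N := by
    simp only [mgf, S, Finset.mul_sum, exp_sum]
    simpa using integral_fintype_prod_eq_pow (ι := Fin N) (fun ω => exp (l * (Y ω - μ[Y]))) (μ := μ)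
  have hchernoff := measure_ge_le_exp_mul_mgf (μ := P) t hl (.of_bound
    (hS.const_mul l).exp.aestronglyMeasurable (exp N)
    (ae_of_all _ fun x => by simpa using (le_abs_self _).trans (hSB x)))
  rw [← ofReal_measureReal]
  refine ENNReal.ofReal_le_ofReal (hchernoff.trans ?_)
  calc exp (-l * t) * mgf S P l ≤ exp (-l * t) * exp (l ^ 2 * Var[Y; μ]) ^ N := by
        rw [hmgf]
        gcongr
        · exact mgf_nonneg
        · exact mgf_sub_integral_le_exp_mul_variance hY hB hl hlB
    _ = exp (N * l ^ 2 * Var[Y; μ] - l * t) := by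
        rw [← exp_nat_mul, ← exp_add]; ring_nf

lemma measure_le_abs_sum_sub_integral_le (hY : Measurable Y) (hB : ∀ ω, |Y ω - μ[Y]| ≤ B)
    (hl : 0 ≤ l) (hlB : l * B ≤ 1) (N : ℕ) (t : ℝ) :
    (Measure.pi fun _ : Fin N => μ) {x | t ≤ |∑ i, (Y (x i) - μ[Y])|} ≤
      2 * ENNReal.ofReal (exp (N * l ^ 2 * Var[Y; μ] - l * t)) := by
  have hnegY : ∀ x : Fin N → α, ∑ i, (-Y (x i) - μ[fun ω => -Y ω]) = -∑ i, (Y (x i) - μ[Y]) :=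
    fun x => by
      simp only [integral_neg, ← Finset.sum_neg_distrib]
      exact Finset.sum_congr rfl fun _ _ => by ring
  have hupper := measure_le_sum_sub_integral_le hY hB hl hlB N t
  have hlower := measure_le_sum_sub_integral_le (Y := fun ω => -Y ω) hY.neg
    (fun ω => by simpa [integral_neg, abs_sub_comm, neg_add_eq_sub] using hB ω) hl hlB N t
  simp only [hnegY, variance_fun_neg] at hlower
  calc (Measure.pi fun _ : Fin N => μ) {x | t ≤ |∑ i, (Y (x i) - μ[Y])|}
      ≤ (Measure.pi fun _ : Fin N => μ) ({x | t ≤ ∑ i, (Y (x i) - μ[Y])} ∪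
          {x | t ≤ -∑ i, (Y (x i) - μ[Y])}) :=
        measure_mono fun x (hx : t ≤ |_|) => le_abs.1 hx
    _ ≤ _ := (measure_union_le _ _).trans (by rw [two_mul]; exact add_le_add hupper hlower)

end Bernstein

lemma sq_mul_rpow_le_of_le_abs {q thr a : ℝ} (hq : 2 ≤ q) (hthr : 0 ≤ thr) (ha : thr ≤ |a|) :
    a ^ 2 * thr ^ q ≤ thr ^ 2 * |a| ^ q := by
  have hsplit : ∀ x : ℝ, 0 ≤ x → x ^ q = x ^ 2 * x ^ (q - 2) := fun x hx => by
    rw [← rpow_natCast, ← rpow_add' hx (by norm_num; linarith)]; norm_num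
  rw [hsplit thr hthr, hsplit |a| (abs_nonneg a), sq_abs]
  have := rpow_le_rpow hthr ha (by linarith : 0 ≤ q - 2)
  calc a ^ 2 * (thr ^ 2 * thr ^ (q - 2)) = thr ^ 2 * (a ^ 2 * thr ^ (q - 2)) := by ring
    _ ≤ thr ^ 2 * (a ^ 2 * |a| ^ (q - 2)) := by gcongr

lemma sq_sq_mul_rpow_le_of_abs_le {q thr a : ℝ} (hq : q ≤ 4) (ha : |a| ≤ thr) :
    (a ^ 2) ^ 2 * thr ^ q ≤ thr ^ 4 * |a| ^ q := by
  have hthr : 0 ≤ thr := (abs_nonneg a).trans ha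
  have hsplit : ∀ x : ℝ, 0 ≤ x → x ^ 4 = x ^ q * x ^ (4 - q) := fun x hx => by
    rw [← rpow_natCast, ← rpow_add' hx (by norm_num)]; norm_num
  have h4 : (a ^ 2) ^ 2 = |a| ^ 4 := by rw [← sq_abs a, ← pow_mul]
  rw [h4, hsplit thr hthr, hsplit |a| (abs_nonneg a)]
  have := rpow_le_rpow (abs_nonneg a) ha (by linarith : 0 ≤ 4 - q)
  calc |a| ^ q * |a| ^ (4 - q) * thr ^ q = thr ^ q * |a| ^ q * |a| ^ (4 - q) := by ring
    _ ≤ thr ^ q * |a| ^ q * thr ^ (4 - q) := by gcongr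
    _ = thr ^ q * thr ^ (4 - q) * |a| ^ q := by ring

section Truncation

variable {α : Type*}

noncomputable def truncSq (f : α → ℝ) (thr : ℝ) : α → ℝ :=
  {ω | |f ω| ≤ thr}.indicator fun ω => f ω ^ 2

noncomputable def exceedInd (f : α → ℝ) (thr : ℝ) : α → ℝ := {ω | thr < |f ω|}.indicator 1

variable {f : α → ℝ} {thr : ℝ}

lemma truncSq_of_abs_le {ω : α} (h : |f ω| ≤ thr) : truncSq f thr ω = f ω ^ 2 :=
  Set.indicator_of_mem (s := {ω | |f ω| ≤ thr}) h _

lemma truncSq_of_lt_abs {ω : α} (h : thr < |f ω|) : truncSq f thr ω = 0 :=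
  Set.indicator_of_notMem (s := {ω | |f ω| ≤ thr}) (not_le.2 h) _

lemma truncSq_nonneg (ω : α) : 0 ≤ truncSq f thr ω :=
  Set.indicator_nonneg (fun _ _ => sq_nonneg _) ω

lemma truncSq_le_sq (ω : α) : truncSq f thr ω ≤ thr ^ 2 := by
  rcases le_or_gt |f ω| thr with h | h
  · rw [truncSq_of_abs_le h, ← sq_abs]
    exact pow_le_pow_left₀ (abs_nonneg _) h 2
  · rw [truncSq_of_lt_abs h]
    positivity

end Truncation

section Moments

variable {α : Type*} [MeasurableSpace α] {μ : Measure α} {f : α → ℝ} {q thr r : ℝ}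

lemma MeasureTheory.MemLp.integrable_abs_rpow (hf : MemLp f (ENNReal.ofReal q) μ) (hq : 0 < q) :
    Integrable (fun ω => |f ω| ^ q) μ := by
  simpa [ENNReal.toReal_ofReal hq.le] using
    hf.integrable_norm_rpow (by simpa using hq) ENNReal.ofReal_ne_top

lemma MeasureTheory.MemLp.integrable_sq_of_two_le [IsFiniteMeasure μ]
    (hf : MemLp f (ENNReal.ofReal q) μ) (hq : 2 ≤ q) :
    Integrable (fun ω => f ω ^ 2) μ :=
  (memLp_two_iff_integrable_sq hf.1).1 (hf.mono_exponent (by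
    rw [← ENNReal.ofReal_ofNat]; exact ENNReal.ofReal_le_ofReal hq))

lemma measurable_truncSq (hf : Measurable f) : Measurable (truncSq f thr) :=
  (hf.pow_const 2).indicator (measurableSet_le hf.abs measurable_const)

lemma measurable_exceedInd (hf : Measurable f) : Measurable (exceedInd f thr) :=
  measurable_const.indicator (measurableSet_lt measurable_const hf.abs)

lemma integrable_truncSq (hf : Measurable f) (hf2 : Integrable (fun ω => f ω ^ 2) μ) :
    Integrable (truncSq f thr) μ :=
  hf2.indicator (measurableSet_le hf.abs measurable_const)

lemma integral_truncSq_le (hf : Measurable f) (hf2 : Integrable (fun ω => f ω ^ 2) μ) :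
    μ[truncSq f thr] ≤ ∫ ω, f ω ^ 2 ∂μ := by
  refine integral_mono (integrable_truncSq hf hf2) hf2 fun ω => ?_
  rcases le_or_gt |f ω| thr with h | h
  · exact (truncSq_of_abs_le h).le
  · exact (truncSq_of_lt_abs h).trans_le (sq_nonneg _)

lemma measureReal_lt_abs_le [IsFiniteMeasure μ] (hfq : Integrable (fun ω => |f ω| ^ q) μ)
    (hq : 0 ≤ q) (hthr : 0 < thr) (hA : ∫ ω, |f ω| ^ q ∂μ ≤ r * thr ^ q) :
    μ.real {ω | thr < |f ω|} ≤ r := by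
  have hmarkov := mul_meas_ge_le_integral_of_nonneg
    (ae_of_all _ fun ω => rpow_nonneg (abs_nonneg (f ω)) q) hfq (thr ^ q)
  have hsub : {ω | thr < |f ω|} ⊆ {ω | thr ^ q ≤ |f ω| ^ q} := fun ω (hω : thr < |f ω|) =>
    rpow_le_rpow hthr.le hω.le hq
  have hthrq : 0 < thr ^ q := rpow_pos_of_pos hthr q
  refine le_of_mul_le_mul_left ?_ hthrq
  calc thr ^ q * μ.real {ω | thr < |f ω|} ≤ thr ^ q * μ.real {ω | thr ^ q ≤ |f ω| ^ q} :=
        mul_le_mul_of_nonneg_left (measureReal_mono hsub) hthrq.le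
    _ ≤ thr ^ q * r := by linarith

lemma integral_sq_sub_integral_truncSq_le (hf : Measurable f)
    (hfq : Integrable (fun ω => |f ω| ^ q) μ) (hf2 : Integrable (fun ω => f ω ^ 2) μ)
    (hq : 2 ≤ q) (hthr : 0 < thr) (hA : ∫ ω, |f ω| ^ q ∂μ ≤ r * thr ^ q) :
    ∫ ω, f ω ^ 2 ∂μ - ∫ ω, truncSq f thr ω ∂μ ≤ r * thr ^ 2 := by
  have hg : Integrable (truncSq f thr) μ := integrable_truncSq hf hf2
  have hpointwise : ∀ ω, (f ω ^ 2 - truncSq f thr ω) * thr ^ q ≤ thr ^ 2 * |f ω| ^ q := by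
    intro ω
    rcases le_or_gt |f ω| thr with h | h
    · rw [truncSq_of_abs_le h, sub_self, zero_mul]
      positivity
    · rw [truncSq_of_lt_abs h, sub_zero]
      exact sq_mul_rpow_le_of_le_abs hq hthr.le h.le
  have hthrq : 0 < thr ^ q := rpow_pos_of_pos hthr q
  refine le_of_mul_le_mul_right ?_ hthrq
  calc (∫ ω, f ω ^ 2 ∂μ - ∫ ω, truncSq f thr ω ∂μ) * thr ^ q
      = ∫ ω, (f ω ^ 2 - truncSq f thr ω) * thr ^ q ∂μ := by
        rw [integral_mul_const, integral_sub hf2 hg]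
    _ ≤ ∫ ω, thr ^ 2 * |f ω| ^ q ∂μ :=
        integral_mono ((hf2.sub hg).mul_const _) (hfq.const_mul _) hpointwise
    _ = thr ^ 2 * ∫ ω, |f ω| ^ q ∂μ := integral_const_mul _ _
    _ ≤ thr ^ 2 * (r * thr ^ q) := by gcongr
    _ = r * thr ^ 2 * thr ^ q := by ring

lemma integral_truncSq_sq_le [IsFiniteMeasure μ] (hf : Measurable f)
    (hfq : Integrable (fun ω => |f ω| ^ q) μ) (hq : q ≤ 4) (hthr : 0 < thr)
    (hA : ∫ ω, |f ω| ^ q ∂μ ≤ r * thr ^ q) :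
    ∫ ω, truncSq f thr ω ^ 2 ∂μ ≤ r * thr ^ 4 := by
  have hg2 : Integrable (fun ω => truncSq f thr ω ^ 2) μ :=
    .of_bound ((measurable_truncSq hf).pow_const 2).aestronglyMeasurable ((thr ^ 2) ^ 2)
      (ae_of_all _ fun ω => by
        rw [Real.norm_eq_abs, abs_of_nonneg (by positivity)]
        exact pow_le_pow_left₀ (truncSq_nonneg ω) (truncSq_le_sq ω) 2)
  have hpointwise : ∀ ω, truncSq f thr ω ^ 2 * thr ^ q ≤ thr ^ 4 * |f ω| ^ q := by
    intro ω
    rcases le_or_gt |f ω| thr with h | h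
    · rw [truncSq_of_abs_le h]
      exact sq_sq_mul_rpow_le_of_abs_le hq h
    · rw [truncSq_of_lt_abs h, zero_pow two_ne_zero, zero_mul]
      positivity
  have hthrq : 0 < thr ^ q := rpow_pos_of_pos hthr q
  refine le_of_mul_le_mul_right ?_ hthrq
  calc (∫ ω, truncSq f thr ω ^ 2 ∂μ) * thr ^ q = ∫ ω, truncSq f thr ω ^ 2 * thr ^ q ∂μ :=
        (integral_mul_const _ _).symm
    _ ≤ ∫ ω, thr ^ 4 * |f ω| ^ q ∂μ :=
        integral_mono (hg2.mul_const _) (hfq.const_mul _) hpointwise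
    _ = thr ^ 4 * ∫ ω, |f ω| ^ q ∂μ := integral_const_mul _ _
    _ ≤ thr ^ 4 * (r * thr ^ q) := by gcongr
    _ = r * thr ^ 4 * thr ^ q := by ring

lemma integral_exceedInd (hf : Measurable f) :
    μ[exceedInd f thr] = μ.real {ω | thr < |f ω|} :=
  integral_indicator_one (measurableSet_lt measurable_const hf.abs)

lemma variance_exceedInd_le [IsProbabilityMeasure μ] (hf : Measurable f) :
    Var[exceedInd f thr; μ] ≤ μ.real {ω | thr < |f ω|} := by
  have hsq : exceedInd f thr ^ 2 = exceedInd f thr := by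
    ext ω
    by_cases h : thr < |f ω| <;> simp [exceedInd, h]
  calc Var[exceedInd f thr; μ] ≤ μ[exceedInd f thr ^ 2] :=
        variance_le_expectation_sq (measurable_exceedInd hf).aestronglyMeasurable
    _ = μ.real {ω | thr < |f ω|} := by
        rw [hsq, integral_exceedInd hf]

end Moments

section EmpiricalSums

variable {α : Type} {N : ℕ} {f : α → ℝ} {thr : ℝ} (x : Fin N → α)

lemma card_goodIdx_add_sum_exceedInd :
    ((goodIdx f thr x).card : ℝ) + ∑ i, exceedInd f thr (x i) = N := by
  rw [goodIdx, Finset.card_filter, Nat.cast_sum, ← Finset.sum_add_distrib]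
  refine (Finset.sum_congr rfl fun i _ => ?_).trans (by simp : ∑ _i : Fin N, (1 : ℝ) = N)
  split_ifs with h
  · rw [exceedInd, Set.indicator_of_notMem (s := {ω | thr < |f ω|}) (not_lt.2 h)]
    norm_num
  · rw [exceedInd, Set.indicator_of_mem (s := {ω | thr < |f ω|}) (not_le.1 h)]
    norm_num

lemma sum_goodIdx_sq : ∑ i ∈ goodIdx f thr x, f (x i) ^ 2 = ∑ i, truncSq f thr (x i) := by
  rw [goodIdx, Finset.sum_filter]
  exact Finset.sum_congr rfl fun i _ => by simp [truncSq, Set.indicator_apply]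

lemma sum_goodIdx_sdiff_sq_le (J : Finset (Fin N)) :
    ∑ i ∈ goodIdx f thr x \ J, f (x i) ^ 2 ≤ ∑ i ∈ goodIdx f thr x, f (x i) ^ 2 :=
  Finset.sum_le_sum_of_subset_of_nonneg Finset.sdiff_subset fun _ _ _ => sq_nonneg _

lemma sum_goodIdx_sq_sub_card_mul_le (J : Finset (Fin N)) :
    ∑ i ∈ goodIdx f thr x, f (x i) ^ 2 - J.card * thr ^ 2 ≤
      ∑ i ∈ goodIdx f thr x \ J, f (x i) ^ 2 := by
  have hsmall : ∑ i ∈ goodIdx f thr x ∩ J, f (x i) ^ 2 ≤ J.card * thr ^ 2 := by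
    calc ∑ i ∈ goodIdx f thr x ∩ J, f (x i) ^ 2 ≤ (goodIdx f thr x ∩ J).card * thr ^ 2 := by
          refine Finset.sum_le_card_nsmul _ _ _ (fun i hi => ?_) |>.trans_eq (nsmul_eq_mul _ _)
          have hi : |f (x i)| ≤ thr := by
            simpa [goodIdx] using Finset.mem_of_mem_inter_left hi
          rw [← sq_abs]
          exact pow_le_pow_left₀ (abs_nonneg _) hi 2
      _ ≤ J.card * thr ^ 2 := by
          gcongr
          exact Finset.inter_subset_right
  linarith [Finset.sum_inter_add_sum_sdiff (goodIdx f thr x) J fun i => f (x i) ^ 2]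

end EmpiricalSums

/-- The event of the theorem, with `ρ` in the role of `m` and `F` in that of `‖f‖²_{L2}`. -/
noncomputable def goodEvent {α : Type} {N : ℕ} (f : α → ℝ) (thr ρ F : ℝ) :
    Set (Fin N → α) :=
  {x | (N : ℝ) - 3 * ρ ≤ (goodIdx f thr x).card ∧
    ∀ J : Finset (Fin N), (J.card : ℝ) ≤ 4 * ρ →
      F - 7 * (ρ / N * thr ^ 2) ≤ (N : ℝ)⁻¹ * ∑ i ∈ goodIdx f thr x \ J, f (x i) ^ 2 ∧
      (N : ℝ)⁻¹ * ∑ i ∈ goodIdx f thr x \ J, f (x i) ^ 2 ≤ F + 2 * (ρ / N * thr ^ 2)}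

lemma mem_goodEvent_of_sum_bounds {α : Type} {N : ℕ} (hN : 0 < N) {f : α → ℝ}
    {thr ρ F : ℝ} {x : Fin N → α} (hcount : ∑ i, exceedInd f thr (x i) ≤ 3 * ρ)
    (hlow : N * F - 3 * ρ * thr ^ 2 ≤ ∑ i, truncSq f thr (x i))
    (hupp : ∑ i, truncSq f thr (x i) ≤ N * F + 2 * ρ * thr ^ 2) :
    x ∈ goodEvent f thr ρ F := by
  have hN' : (0 : ℝ) < N := Nat.cast_pos.2 hN
  refine ⟨by linarith [card_goodIdx_add_sum_exceedInd (f := f) (thr := thr) x], fun J hJ => ?_⟩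
  have hlowJ := sum_goodIdx_sq_sub_card_mul_le (f := f) (thr := thr) x J
  have huppJ := sum_goodIdx_sdiff_sq_le (f := f) (thr := thr) x J
  rw [sum_goodIdx_sq] at hlowJ huppJ
  have hJ' : (J.card : ℝ) * thr ^ 2 ≤ 4 * ρ * thr ^ 2 := by gcongr
  have hscale : ∀ c : ℝ, (N : ℝ) * (F + c * (ρ / N * thr ^ 2)) = N * F + c * ρ * thr ^ 2 :=
    fun c => by field_simp
  rw [le_inv_mul_iff₀ hN', inv_mul_le_iff₀ hN', sub_eq_add_neg, ← neg_mul, hscale, hscale]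
  constructor <;> linarith

section Deviations

variable {α : Type*} [MeasurableSpace α] {μ : Measure α} [IsProbabilityMeasure μ] {f : α → ℝ}
  {q thr ρ : ℝ} {N : ℕ}

lemma measure_sum_exceedInd_sub_ge_le (hf : Measurable f)
    (hfq : Integrable (fun ω => |f ω| ^ q) μ) (hq : 0 ≤ q) (hthr : 0 < thr) (hN : 0 < N)
    (hA : ∫ ω, |f ω| ^ q ∂μ ≤ ρ / N * thr ^ q) :
    (Measure.pi fun _ : Fin N => μ)
        {x | 2 * ρ ≤ ∑ i, (exceedInd f thr (x i) - μ[exceedInd f thr])} ≤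
      ENNReal.ofReal (exp (-ρ)) := by
  have hm := measurable_exceedInd (thr := thr) hf
  have hvar : N * Var[exceedInd f thr; μ] ≤ ρ := by
    rw [← mul_div_cancel₀ ρ (Nat.cast_pos.2 hN).ne']
    gcongr
    exact (variance_exceedInd_le hf).trans (measureReal_lt_abs_le hfq hq hthr hA)
  refine (measure_le_sum_sub_integral_le hm (abs_sub_integral_le_of_nonneg_of_le hm
    (Set.indicator_nonneg fun _ _ => zero_le_one) (Set.indicator_le_self' fun _ _ => zero_le_one))
    zero_le_one (one_mul 1).le N (2 * ρ)).trans (ENNReal.ofReal_le_ofReal (exp_le_exp.2 ?_))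
  linarith

lemma measure_abs_sum_truncSq_sub_ge_le (hf : Measurable f)
    (hfq : Integrable (fun ω => |f ω| ^ q) μ) (hq : q ≤ 4) (hthr : 0 < thr) (hN : 0 < N)
    (hA : ∫ ω, |f ω| ^ q ∂μ ≤ ρ / N * thr ^ q) :
    (Measure.pi fun _ : Fin N => μ)
        {x | 2 * ρ * thr ^ 2 ≤ |∑ i, (truncSq f thr (x i) - μ[truncSq f thr])|} ≤
      2 * ENNReal.ofReal (exp (-ρ)) := by
  have hm := measurable_truncSq (thr := thr) hf
  have hthr2 : 0 < thr ^ 2 := by positivity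
  have hvar : Var[truncSq f thr; μ] ≤ ρ / N * thr ^ 4 :=
    (variance_le_expectation_sq hm.aestronglyMeasurable).trans
      (integral_truncSq_sq_le hf hfq hq hthr hA)
  refine (measure_le_abs_sum_sub_integral_le hm (abs_sub_integral_le_of_nonneg_of_le hm
    truncSq_nonneg truncSq_le_sq) (inv_nonneg.2 hthr2.le) (inv_mul_cancel₀ hthr2.ne').le
    N (2 * ρ * thr ^ 2)).trans ?_
  gcongr
  calc N * (thr ^ 2)⁻¹ ^ 2 * Var[truncSq f thr; μ] - (thr ^ 2)⁻¹ * (2 * ρ * thr ^ 2)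
      ≤ N * (thr ^ 2)⁻¹ ^ 2 * (ρ / N * thr ^ 4) - (thr ^ 2)⁻¹ * (2 * ρ * thr ^ 2) := by
        gcongr
    _ = -ρ := by field_simp; ring

end Deviations

-- `3t² ≤ 2t` whenever `1 - 2t > 0`: this turns `3e^{-m}` into the bound `1 - 2e^{-m/2}`.
lemma ofReal_one_sub_two_mul_le_of_measure_compl_le {β : Type*} [MeasurableSpace β]
    {P : Measure β} [IsProbabilityMeasure P] {s : Set β} {t : ℝ} (ht : 0 ≤ t)
    (hs : P sᶜ ≤ ENNReal.ofReal (3 * t ^ 2)) : ENNReal.ofReal (1 - 2 * t) ≤ P s := by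
  rcases le_or_gt (1 - 2 * t) 0 with h | h
  · rw [ENNReal.ofReal_of_nonpos h]
    exact zero_le
  refine ENNReal.le_of_add_le_add_right (ENNReal.ofReal_ne_top (r := 3 * t ^ 2)) ?_
  calc ENNReal.ofReal (1 - 2 * t) + ENNReal.ofReal (3 * t ^ 2)
      = ENNReal.ofReal (1 - 2 * t + 3 * t ^ 2) := (ENNReal.ofReal_add h.le (by positivity)).symm
    _ ≤ P Set.univ := by
        rw [measure_univ, ← ENNReal.ofReal_one]
        exact ENNReal.ofReal_le_ofReal (by nlinarith)
    _ ≤ P s + P sᶜ := measure_univ_le_add_compl s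
    _ ≤ P s + ENNReal.ofReal (3 * t ^ 2) := by gcongr

theorem ofReal_le_measure_goodEvent {α : Type} [MeasurableSpace α] {μ : Measure α}
    [IsProbabilityMeasure μ] {f : α → ℝ} {q thr ρ : ℝ} (hf : Measurable f)
    (hfq : Integrable (fun ω => |f ω| ^ q) μ) (hf2 : Integrable (fun ω => f ω ^ 2) μ)
    (hq2 : 2 ≤ q) (hq4 : q ≤ 4) (hthr : 0 < thr) {N : ℕ} (hN : 0 < N)
    (hA : ∫ ω, |f ω| ^ q ∂μ ≤ ρ / N * thr ^ q) :
    ENNReal.ofReal (1 - 2 * exp (-ρ / 2)) ≤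
      (Measure.pi fun _ : Fin N => μ) (goodEvent f thr ρ (∫ ω, f ω ^ 2 ∂μ)) := by
  have hN' : (0 : ℝ) < N := Nat.cast_pos.2 hN
  have hmean_h : N * μ[exceedInd f thr] ≤ ρ := by
    rw [integral_exceedInd hf, ← le_div_iff₀' hN']
    exact measureReal_lt_abs_le hfq (by linarith) hthr hA
  have hmean_g := integral_sq_sub_integral_truncSq_le hf hfq hf2 hq2 hthr hA
  have hmean_g' := integral_truncSq_le (thr := thr) hf hf2
  have hgood : ({x : Fin N → α | 2 * ρ ≤ ∑ i, (exceedInd f thr (x i) - μ[exceedInd f thr])} ∪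
      {x | 2 * ρ * thr ^ 2 ≤ |∑ i, (truncSq f thr (x i) - μ[truncSq f thr])|})ᶜ ⊆
      goodEvent f thr ρ (∫ ω, f ω ^ 2 ∂μ) := by
    intro x hx
    simp only [Set.compl_union, Set.mem_inter_iff, Set.mem_compl_iff, Set.mem_ofPred_eq,
      not_le, Finset.sum_sub_distrib, Finset.sum_const, Finset.card_univ, Fintype.card_fin,
      nsmul_eq_mul, abs_lt] at hx
    have hscale : (N : ℝ) * (ρ / N * thr ^ 2) = ρ * thr ^ 2 := by field_simp
    have hupp := mul_le_mul_of_nonneg_left hmean_g' hN'.le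
    have hlow := mul_le_mul_of_nonneg_left hmean_g hN'.le
    rw [mul_sub, hscale] at hlow
    exact mem_goodEvent_of_sum_bounds hN (by linarith) (by linarith) (by linarith)
  refine ofReal_one_sub_two_mul_le_of_measure_compl_le (exp_pos _).le
    ((measure_mono (Set.compl_subset_comm.1 hgood)).trans ?_)
  calc _ ≤ ENNReal.ofReal (exp (-ρ)) + 2 * ENNReal.ofReal (exp (-ρ)) :=
        (measure_union_le _ _).trans (add_le_add
          (measure_sum_exceedInd_sub_ge_le hf hfq (by linarith) hthr hN hA)
          (measure_abs_sum_truncSq_sub_ge_le hf hfq hq4 hthr hN hA))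
    _ = ENNReal.ofReal (3 * exp (-ρ / 2) ^ 2) := by
        rw [← exp_nat_mul, show ((2 : ℕ) : ℝ) * (-ρ / 2) = -ρ by push_cast; ring,
          ENNReal.ofReal_mul (by norm_num), ENNReal.ofReal_ofNat]
        ring

lemma rpow_one_div_mul_rpow {s a q : ℝ} (hs : 0 ≤ s) (ha : 0 ≤ a) (hq : q ≠ 0) :
    (s ^ (1 / q) * a) ^ q = s * a ^ q := by
  rw [mul_rpow (rpow_nonneg hs _) ha, one_div, rpow_inv_rpow hs hq]

lemma inv_mul_rpow_one_div_mul_sq {s a q : ℝ} (hs : 0 < s) :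
    s⁻¹ * (s ^ (1 / q) * a) ^ 2 = a ^ 2 * s⁻¹ ^ (1 - 2 / q) := by
  rw [mul_pow, ← rpow_natCast (s ^ (1 / q)), ← rpow_mul hs.le, inv_rpow hs.le,
    rpow_sub hs, rpow_one]
  field_simp
  norm_num
  ring

lemma lqnorm_rpow {α : Type} [MeasurableSpace α] {μ : Measure α} {q : ℝ} {f : α → ℝ}
    (hq : q ≠ 0) (hA : 0 ≤ ∫ ω, |f ω| ^ q ∂μ) : lqnorm μ q f ^ q = ∫ ω, |f ω| ^ q ∂μ := by
  rw [lqnorm, one_div, rpow_inv_rpow hA hq]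

/-- Theorem 3.2, estimate for a single function. There are absolute
constants `c₀, c₁, c₂`, and for `2 < q ≤ 4` constants `c₃, c₄ = c(q)`, such that if
`N ≥ c₀·m` then with probability at least `1 - 2exp(-c₁m)`: `|I_f| ≥ N - c₂m`, and for
every `J` with `|J| ≤ 4m`, `N⁻¹∑_{i ∈ I_f \ J} f²(X_i)` is within
`c·‖f‖²_{Lq}(m/N)^{1-2/q}` of `‖f‖²_{L2}`. -/
theorem statement5 :
    ∃ c₀ c₁ c₂ : ℝ, 0 < c₀ ∧ 0 < c₁ ∧ 0 < c₂ ∧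
    ∀ q : ℝ, 2 < q → q ≤ 4 →
    ∃ c₃ c₄ : ℝ, 0 < c₃ ∧ 0 < c₄ ∧
    ∀ (Ω : Type) [MeasurableSpace Ω] (μ : Measure Ω) [IsProbabilityMeasure μ]
      (f : Ω → ℝ), Measurable f → MemLp f (ENNReal.ofReal q) μ →
      0 < ∫ a, |f a| ^ q ∂μ →
    ∀ m N : ℕ, 1 ≤ m → m ≤ N → c₀ * m ≤ (N : ℝ) →
    ENNReal.ofReal (1 - 2 * Real.exp (-c₁ * m)) ≤
      (Measure.pi fun _ : Fin N => μ)
        {x | ((N : ℝ) - c₂ * m ≤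
                ((goodIdx f (((N : ℝ) / m) ^ (1 / q) * lqnorm μ q f) x).card : ℝ)) ∧
          ∀ J : Finset (Fin N), J.card ≤ 4 * m →
            (l2norm μ f ^ 2 - c₃ * lqnorm μ q f ^ 2 * ((m : ℝ) / N) ^ (1 - 2 / q) ≤
              (N : ℝ)⁻¹ * ∑ i ∈ (goodIdx f (((N : ℝ) / m) ^ (1 / q) * lqnorm μ q f) x) \ J,
                f (x i) ^ 2) ∧
            ((N : ℝ)⁻¹ * ∑ i ∈ (goodIdx f (((N : ℝ) / m) ^ (1 / q) * lqnorm μ q f) x) \ J,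
                f (x i) ^ 2 ≤
              l2norm μ f ^ 2 + c₄ * lqnorm μ q f ^ 2 * ((m : ℝ) / N) ^ (1 - 2 / q))} := by
  refine ⟨1, 1 / 2, 3, one_pos, by norm_num, by norm_num, fun q hq2 hq4 =>
    ⟨7, 2, by norm_num, by norm_num, ?_⟩⟩
  intro Ω _ μ _ f hf hfq hApos m N hm hmN _
  have hN : 0 < N := Nat.lt_of_lt_of_le hm hmN
  have hNm : (0 : ℝ) < N / m := div_pos (by exact_mod_cast hN) (by exact_mod_cast hm)
  have hq0 : 0 < q := by linarith
  set nq := lqnorm μ q f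
  set thr := ((N : ℝ) / m) ^ (1 / q) * nq with hthr_def
  have hnq : 0 < nq := rpow_pos_of_pos hApos _
  have hA : ∫ ω, |f ω| ^ q ∂μ ≤ m / N * thr ^ q := by
    rw [hthr_def, rpow_one_div_mul_rpow hNm.le hnq.le hq0.ne', lqnorm_rpow hq0.ne' hApos.le,
      ← mul_assoc, ← inv_div, inv_mul_cancel₀ hNm.ne', one_mul]
  have hδ : m / N * thr ^ 2 = nq ^ 2 * ((m : ℝ) / N) ^ (1 - 2 / q) := by
    rw [← inv_div, inv_mul_rpow_one_div_mul_sq hNm]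
  have hmain := ofReal_le_measure_goodEvent (ρ := m) hf (hfq.integrable_abs_rpow hq0)
    (hfq.integrable_sq_of_two_le hq2.le) hq2.le hq4 (mul_pos (rpow_pos_of_pos hNm _) hnq) hN hA
  rw [show -(1 / 2) * (m : ℝ) = -m / 2 by ring]
  refine hmain.trans (measure_mono fun x hx => ⟨hx.1, fun J hJ => ?_⟩)
  rw [l2norm, sq_sqrt (integral_nonneg fun _ => sq_nonneg _), mul_assoc (7 : ℝ),
    mul_assoc (2 : ℝ), ← hδ]
  exact hx.2 J (by exact_mod_cast hJ)
end

section
/- There exist absolute constants c1 and c2 for which the following holds. Let Z ∈ L2 be a nonzero real-valued random variable satisfying Pr(|Z| ≥ κ0‖Z‖_{L2}) ≥ ε for some κ0 > 0 and 0 < ε < 1, let 0 < δ < 1, and let Z_1,…,Z_N be independent copies of Z. Then with probability at least 1 − 2exp(−c1 δ²ε N) there is a subset I ⊂ {1,…,N} with |I| ≥ (1−δ)εN such that for every i ∈ I, κ0‖Z‖_{L2} ≤ |Z_i| ≤ c2‖Z‖_{L2}/√(δε). -/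
/-!
Let `A = {|Z| ≥ κ₀‖Z‖₂}` and `C = {|Z| > 4‖Z‖₂/√(δε)}`, so that `μ A ≥ ε` by assumption and
`μ C ≤ δε/16` by Chebyshev. The numbers of sample points in `A` and in `C` are binomial, with
moment generating function `(1 + p(eᵗ - 1))^N ≤ exp(Np(eᵗ - 1))`, and the Chernoff bounds show
that outside an event of probability at most `2exp(-δ²εN/8)` more than `(1 - δ/2)εN` points lie
in `A` and fewer than `δεN/2` lie in `C`. The indices of the points in `A \ C` then form `I`.
-/

open MeasureTheory ProbabilityTheory

variable {Ω : Type} [MeasurableSpace Ω]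

open Real Finset

lemma Real.exp_neg_le_one_sub_add_sq_div_two {u : ℝ} (hu : 0 ≤ u) :
    exp (-u) ≤ 1 - u + u ^ 2 / 2 := by
  -- `(1 - u + u²/2)(1 + u + u²/2) = 1 + u⁴/4` and `1 + u + u²/2 ≤ eᵘ`
  rw [exp_neg, inv_le_iff_one_le_mul₀ (exp_pos u)]
  have hpos : 0 ≤ 1 - u + u ^ 2 / 2 := by nlinarith [sq_nonneg (u - 1)]
  nlinarith [mul_le_mul_of_nonneg_left (quadratic_le_exp_of_nonneg hu) hpos, pow_nonneg hu 4]

section Hits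

variable {α ι : Type*} [Fintype ι]

noncomputable def hits (A : Set α) (x : ι → α) : Finset ι :=
  open Classical in {i | x i ∈ A}

@[simp]
lemma mem_hits {A : Set α} {x : ι → α} {i : ι} : i ∈ hits A x ↔ x i ∈ A := by
  simp [hits]

lemma card_hits_eq_sum_indicator (A : Set α) (x : ι → α) :
    ((hits A x).card : ℝ) = ∑ i, A.indicator 1 (x i) := by
  classical
  rw [hits, natCast_card_filter]
  simp [Set.indicator_apply]

lemma card_hits_sub_card_hits_le (A C : Set α) (x : ι → α) :
    ((hits A x).card : ℝ) - (hits C x).card ≤ (hits (A \ C) x).card := by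
  classical
  have hsub : hits A x ⊆ hits (A \ C) x ∪ hits C x := by
    intro i hi
    by_cases hC : x i ∈ C <;> simp_all
  have hcard := (card_le_card hsub).trans (card_union_le _ _)
  rw [sub_le_iff_le_add]
  exact_mod_cast hcard

end Hits

section Chernoff

variable {α ι : Type*} [Fintype ι] [MeasurableSpace α] {μ : Measure α} [IsProbabilityMeasure μ]
  {A : Set α}

lemma measurable_card_hits (hA : MeasurableSet A) :
    Measurable fun x : ι → α => ((hits A x).card : ℝ) := by
  simp_rw [card_hits_eq_sum_indicator]
  exact Finset.measurable_sum _ fun i _ =>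
    (measurable_const.indicator hA).comp (measurable_pi_apply i)

lemma integrable_exp_mul_card_hits (hA : MeasurableSet A) (t : ℝ) :
    Integrable (fun x : ι → α => exp (t * (hits A x).card)) (Measure.pi fun _ => μ) := by
  refine .of_bound ((measurable_card_hits hA).const_mul t).exp.aestronglyMeasurable
    (exp (|t| * Fintype.card ι)) (ae_of_all _ fun x => ?_)
  have hcard : ((hits A x).card : ℝ) ≤ Fintype.card ι := by exact_mod_cast card_le_univ _
  rw [norm_of_nonneg (exp_pos _).le, exp_le_exp]
  calc t * (hits A x).card ≤ |t| * (hits A x).card := by gcongr; exact le_abs_self t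
    _ ≤ |t| * Fintype.card ι := by gcongr

lemma mgf_card_hits (hA : MeasurableSet A) (t : ℝ) :
    mgf (fun x : ι → α => ((hits A x).card : ℝ)) (Measure.pi fun _ => μ) t
      = (1 + μ.real A * (exp t - 1)) ^ Fintype.card ι := by
  have hprod (x : ι → α) :
      exp (t * (hits A x).card) = ∏ i, (1 + A.indicator (fun _ => exp t - 1) (x i)) := by
    rw [card_hits_eq_sum_indicator, mul_sum, exp_sum]
    refine prod_congr rfl fun i _ => ?_
    by_cases h : x i ∈ A <;> simp [h]
  simp_rw [mgf, hprod]
  rw [integral_fintype_prod_eq_pow (fun a => 1 + A.indicator (fun _ => exp t - 1) a),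
    integral_add (integrable_const 1) ((integrable_const _).indicator hA),
    integral_indicator_const _ hA]
  simp [mul_comm]

lemma mgf_card_hits_le (hA : MeasurableSet A) (t : ℝ) :
    mgf (fun x : ι → α => ((hits A x).card : ℝ)) (Measure.pi fun _ => μ) t
      ≤ exp (Fintype.card ι * μ.real A * (exp t - 1)) := by
  rw [mgf_card_hits hA, mul_assoc, exp_nat_mul]
  have hp0 : 0 ≤ μ.real A := measureReal_nonneg
  have hp1 : μ.real A ≤ 1 := measureReal_le_one
  refine pow_le_pow_left₀ ?_ (by linarith [add_one_le_exp (μ.real A * (exp t - 1))]) _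
  nlinarith [exp_pos t]

lemma measureReal_le_card_hits_le (hA : MeasurableSet A) {s : ℝ}
    (hs : 4 * Fintype.card ι * μ.real A ≤ s) :
    (Measure.pi fun _ => μ).real {x : ι → α | s ≤ (hits A x).card} ≤ exp (-(s / 2)) := by
  calc _ ≤ exp (-1 * s) * mgf (fun x : ι → α => ((hits A x).card : ℝ)) (Measure.pi fun _ => μ) 1 :=
        measure_ge_le_exp_mul_mgf s zero_le_one (integrable_exp_mul_card_hits hA 1)
    _ ≤ exp (-1 * s) * exp (Fintype.card ι * μ.real A * (exp 1 - 1)) := by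
        gcongr; exact mgf_card_hits_le hA 1
    _ ≤ exp (-(s / 2)) := by
        rw [← exp_add, exp_le_exp]
        have he : exp 1 - 1 ≤ 2 := by linarith [exp_one_lt_d9]
        have hp : 0 ≤ Fintype.card ι * μ.real A := by positivity
        nlinarith

lemma measureReal_card_hits_le_le (hA : MeasurableSet A) {q η : ℝ} (hq₀ : 0 ≤ q)
    (hq : q ≤ μ.real A) (hη : 0 ≤ η) :
    (Measure.pi fun _ => μ).real {x : ι → α | (hits A x).card ≤ (1 - η) * q * Fintype.card ι}
      ≤ exp (-(η ^ 2 * q * Fintype.card ι / 2)) := by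
  set n : ℝ := (Fintype.card ι : ℝ)
  calc _ ≤ exp (-(-η) * ((1 - η) * q * n))
          * mgf (fun x : ι → α => ((hits A x).card : ℝ)) (Measure.pi fun _ => μ) (-η) :=
        measure_le_le_exp_mul_mgf _ (neg_nonpos.mpr hη) (integrable_exp_mul_card_hits hA _)
    _ ≤ exp (-(-η) * ((1 - η) * q * n)) * exp (n * μ.real A * (exp (-η) - 1)) := by
        gcongr; exact mgf_card_hits_le hA _
    _ ≤ exp (-(η ^ 2 * q * n / 2)) := by
        rw [← exp_add, exp_le_exp]
        have hn : 0 ≤ n := Nat.cast_nonneg _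
        have hexp₁ : exp (-η) - 1 ≤ 0 := by linarith [exp_le_one_iff.mpr (neg_nonpos.mpr hη)]
        have hexp₂ := exp_neg_le_one_sub_add_sq_div_two hη
        have hpq : n * μ.real A * (exp (-η) - 1) ≤ n * q * (exp (-η) - 1) :=
          mul_le_mul_of_nonpos_right (by gcongr) hexp₁
        have hq : n * q * (exp (-η) - 1) ≤ n * q * (-η + η ^ 2 / 2) := by
          gcongr; linarith
        nlinarith

end Chernoff

lemma measureReal_lt_abs_le_integral_sq_div {β : Type*} [MeasurableSpace β] {μ : Measure β}
    [IsFiniteMeasure μ] {Z : β → ℝ} (hZ : MemLp Z 2 μ) {T : ℝ} (hT : 0 < T) :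
    μ.real {a | T < |Z a|} ≤ (∫ a, Z a ^ 2 ∂μ) / T ^ 2 := by
  have hsub : {a | T < |Z a|} ⊆ {a | T ^ 2 ≤ Z a ^ 2} := fun a ha => by
    simpa only [Set.mem_ofPred_eq, sq_abs] using pow_le_pow_left₀ hT.le (le_of_lt ha) 2
  rw [le_div_iff₀ (by positivity), mul_comm]
  calc T ^ 2 * μ.real {a | T < |Z a|} ≤ T ^ 2 * μ.real {a | T ^ 2 ≤ Z a ^ 2} :=
        mul_le_mul_of_nonneg_left (measureReal_mono hsub) (by positivity)
    _ ≤ ∫ a, Z a ^ 2 ∂μ :=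
        mul_meas_ge_le_integral_of_nonneg (ae_of_all _ fun a => sq_nonneg (Z a))
          hZ.integrable_sq _

lemma measureReal_lt_abs_le_div_sq {μ : Measure Ω} [IsFiniteMeasure μ] {Z : Ω → ℝ}
    (hZ : MemLp Z 2 μ) (hZ2 : 0 < ∫ a, Z a ^ 2 ∂μ) {c r : ℝ} (hc : 0 < c) (hr : 0 < r) :
    μ.real {a | c * l2norm μ Z / √r < |Z a|} ≤ r / c ^ 2 := by
  have hL : l2norm μ Z ^ 2 = ∫ a, Z a ^ 2 ∂μ := sq_sqrt hZ2.le
  have hLpos : 0 < l2norm μ Z := sqrt_pos.mpr hZ2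
  refine (measureReal_lt_abs_le_integral_sq_div hZ (by positivity)).trans_eq ?_
  rw [div_pow, mul_pow, sq_sqrt hr.le, ← hL]
  field_simp

lemma ofReal_one_sub_le_of_compl_subset_union {β : Type*} [MeasurableSpace β] {ν : Measure β}
    [IsProbabilityMeasure ν] {S B₁ B₂ : Set β} {a b : ℝ} (hS : Sᶜ ⊆ B₁ ∪ B₂)
    (h₁ : ν.real B₁ ≤ a) (h₂ : ν.real B₂ ≤ b) :
    ENNReal.ofReal (1 - (a + b)) ≤ ν S := by
  refine ENNReal.ofReal_le_of_le_toReal ?_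
  have hcover : 1 ≤ ν.real S + ν.real (B₁ ∪ B₂) :=
    calc 1 = ν.real (S ∪ Sᶜ) := by simp
      _ ≤ ν.real S + ν.real Sᶜ := measureReal_union_le _ _
      _ ≤ ν.real S + ν.real (B₁ ∪ B₂) := by grw [measureReal_mono hS]
  have hunion := measureReal_union_le (μ := ν) B₁ B₂
  rw [← measureReal_def]
  linarith

/-- Lemma 3.7. If `Z` satisfies a small-ball condition with constants
`κ₀, ε`, then with probability at least `1 - 2exp(-c₁δ²εN)` there is `I ⊆ {1,…,N}` of
cardinality at least `(1-δ)εN` on which `κ₀‖Z‖_{L2} ≤ |Z_i| ≤ c₂‖Z‖_{L2}/√(δε)`. -/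
theorem statement9 :
    ∃ c₁ c₂ : ℝ, 0 < c₁ ∧ 0 < c₂ ∧
    ∀ (Ω : Type) [MeasurableSpace Ω] (μ : Measure Ω) [IsProbabilityMeasure μ]
      (Z : Ω → ℝ), Measurable Z → MemLp Z 2 μ → 0 < ∫ a, Z a ^ 2 ∂μ →
    ∀ κ₀ ε δ : ℝ, 0 < κ₀ → 0 < ε → ε < 1 → 0 < δ → δ < 1 →
    ENNReal.ofReal ε ≤ μ {a | κ₀ * l2norm μ Z ≤ |Z a|} →
    ∀ N : ℕ, 0 < N →
    ENNReal.ofReal (1 - 2 * Real.exp (-c₁ * δ ^ 2 * ε * N)) ≤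
      (Measure.pi fun _ : Fin N => μ)
        {x | ∃ I : Finset (Fin N), (1 - δ) * ε * N ≤ (I.card : ℝ) ∧
          ∀ i ∈ I, κ₀ * l2norm μ Z ≤ |Z (x i)| ∧
            |Z (x i)| ≤ c₂ * l2norm μ Z / Real.sqrt (δ * ε)} := by
  refine ⟨1 / 8, 4, by norm_num, by norm_num, ?_⟩
  intro Ω _ μ _ Z hZ hZL2 hZ2 κ₀ ε δ _ hε _ hδ hδ1 hsmall N _
  set A := {a | κ₀ * l2norm μ Z ≤ |Z a|}
  set C := {a | 4 * l2norm μ Z / √(δ * ε) < |Z a|}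
  have hδεN : 0 ≤ δ * ε * N := by positivity
  have hA : ε ≤ μ.real A := (ENNReal.ofReal_le_iff_le_toReal (measure_ne_top μ A)).mp hsmall
  have hC : 4 * (Fintype.card (Fin N) : ℝ) * μ.real C ≤ δ / 2 * ε * N := by
    have := measureReal_lt_abs_le_div_sq hZL2 hZ2 four_pos (mul_pos hδ hε)
    rw [Fintype.card_fin]
    nlinarith [mul_le_mul_of_nonneg_left this (N.cast_nonneg : (0 : ℝ) ≤ N)]
  have lower := measureReal_card_hits_le_le (ι := Fin N)
    (measurableSet_le measurable_const hZ.abs) hε.le hA (η := δ / 2) (by positivity)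
  have upper := measureReal_le_card_hits_le (measurableSet_lt measurable_const hZ.abs) hC
  simp only [Fintype.card_fin] at lower upper
  rw [two_mul]
  refine ofReal_one_sub_le_of_compl_subset_union ?_ (lower.trans ?_) (upper.trans ?_)
  · intro x hx
    by_contra hB
    simp only [Set.mem_union, Set.mem_ofPred_eq, not_or, not_le] at hB
    refine hx ⟨hits (A \ C) x, ?_, fun i hi => ?_⟩
    · linarith [card_hits_sub_card_hits_le A C x]
    · obtain ⟨hiA, hiC⟩ := mem_hits.mp hi
      exact ⟨hiA, not_lt.mp hiC⟩
  · rw [exp_le_exp]; nlinarith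
  · rw [exp_le_exp]; nlinarith [mul_nonneg hδεN (sub_nonneg.mpr hδ1.le)]
end
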